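/- arXiv:1707.06778 — 5 statements merged into one kernel-verified Lean document; each statement's English description precedes it below -/
import Mathlib

section
/- Let V ≥ 1 and n ≤ N be natural numbers, and let ε, δ ∈ (0,1). Let X be a binomial random variable with n trials and success probability 1/V. If (N : ℝ) ≥ V/(δ·ε²), then Pr(|V·X − n| ≥ ε·N) ≤ δ. (This is the exact balls-and-bins form of the paper's sampling-accuracy theorem: the number X of the n = f_p packets of prefix p that land in a fixed one of V bins is Binomial(n, 1/V), and its rescaling V·X estimates f_p within ε·N with probability at least 1 − δ once N exceeds the convergence threshold, stated here with the rigorous Chebyshev threshold V/(δ·ε²) in place of Z_{1−δ/2}·V·ε⁻².) -/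
/-!
Chebyshev's inequality for the binomial law: the event `ε N ≤ |V X - n|` is the event that `X`
deviates from its mean `n / V` by at least `ε N / V`, which has probability at most
`Var X / (ε N / V)² ≤ (n / V) (V / (ε N))² ≤ V / (ε² N) ≤ δ`. The variance `n p (1 - p)` is the
variance identity of the Bernstein polynomials evaluated at `p`.
-/

open MeasureTheory

/-- `X` is a binomial random variable with `n` trials and success probability `p`
on the probability space `(Ω, μ)`: its law is given by the binomial pmf. -/
def IsBinomial {Ω : Type*} [MeasurableSpace Ω] (μ : Measure Ω) (X : Ω → ℕ) (n : ℕ) (p : ℝ) :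
    Prop :=
  ∀ k : ℕ, μ {ω | X ω = k} = ENNReal.ofReal ((n.choose k : ℝ) * p ^ k * (1 - p) ^ (n - k))

open Finset

theorem sum_range_sq_sub_mul_choose_mul_pow (n : ℕ) (p : ℝ) :
    ∑ k ∈ range (n + 1), ((n : ℝ) * p - k) ^ 2 * ((n.choose k : ℝ) * p ^ k * (1 - p) ^ (n - k))
      = n * p * (1 - p) := by
  have h := congrArg (Polynomial.eval p) (bernsteinPolynomial.variance (R := ℝ) n)
  simp only [Polynomial.eval_finsetSum, Polynomial.eval_mul, Polynomial.eval_pow,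
    Polynomial.eval_sub, Polynomial.eval_natCast, Polynomial.eval_X,
    Polynomial.eval_one, bernsteinPolynomial, nsmul_eq_mul] at h
  convert h using 2

theorem measure_preimage_le_tsum_subtype {Ω : Type*} [MeasurableSpace Ω] (μ : Measure Ω)
    (X : Ω → ℕ) (S : Set ℕ) : μ (X ⁻¹' S) ≤ ∑' k : S, μ (X ⁻¹' {(k : ℕ)}) := by
  rw [← Set.biUnion_preimage_singleton]
  exact measure_biUnion_le μ S.to_countable _

theorem IsBinomial.measure_le_abs_sub_le {Ω : Type*} [MeasurableSpace Ω] {μ : Measure Ω}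
    {X : Ω → ℕ} {n : ℕ} {p : ℝ} (hX : IsBinomial μ X n p) (hp₀ : 0 ≤ p) (hp₁ : p ≤ 1)
    {t : ℝ} (ht : 0 < t) :
    μ {ω | t ≤ |(X ω : ℝ) - n * p|} ≤ ENNReal.ofReal (n * p * (1 - p) / t ^ 2) := by
  set w : ℕ → ℝ := fun k ↦ (n.choose k : ℝ) * p ^ k * (1 - p) ^ (n - k)
  set S : Set ℕ := {k | t ≤ |(k : ℝ) - n * p|}
  have hw : ∀ k, 0 ≤ w k := fun k ↦ by
    have : 0 ≤ 1 - p := by linarith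
    positivity
  -- Markov's inequality applied to `(X - n p)² / t²`, which is at least `1` on the event.
  set f : ℕ → ℝ := fun k ↦ ((n : ℝ) * p - k) ^ 2 / t ^ 2 * w k
  have hfS : ∀ k ∈ S, w k ≤ f k := fun k hk ↦ by
    have hsq : t ^ 2 ≤ ((n : ℝ) * p - k) ^ 2 := by
      rw [← sq_abs ((n : ℝ) * p - k), abs_sub_comm]
      exact pow_le_pow_left₀ ht.le hk 2
    exact le_mul_of_one_le_left (hw k) ((one_le_div (by positivity)).mpr hsq)
  have hf_supp : ∀ k ∉ range (n + 1), f k = 0 := fun k hk ↦ by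
    simp [f, w, Nat.choose_eq_zero_of_lt (by simpa using hk : n < k)]
  calc μ {ω | t ≤ |(X ω : ℝ) - n * p|} = μ (X ⁻¹' S) := rfl
    _ ≤ ∑' k : S, μ (X ⁻¹' {(k : ℕ)}) := measure_preimage_le_tsum_subtype μ X S
    _ ≤ ∑' k : S, ENNReal.ofReal (f k) :=
        ENNReal.tsum_le_tsum fun k ↦ (hX k).trans_le (ENNReal.ofReal_le_ofReal (hfS k k.2))
    _ ≤ ∑' k, ENNReal.ofReal (f k) :=
        ENNReal.tsum_comp_le_tsum_of_injective Subtype.val_injective _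
    _ = ENNReal.ofReal (∑ k ∈ range (n + 1), f k) := by
        rw [tsum_eq_sum fun k hk ↦ by rw [hf_supp k hk, ENNReal.ofReal_zero],
          ENNReal.ofReal_sum_of_nonneg fun k _ ↦ by positivity]
    _ = ENNReal.ofReal (n * p * (1 - p) / t ^ 2) := by
        rw [← sum_range_sq_sub_mul_choose_mul_pow, Finset.sum_div]
        simp only [f, w, div_mul_eq_mul_div]

theorem mul_one_sub_div_sq_le_of_div_le {V n N ε δ : ℝ} (hV : 1 ≤ V) (hn₀ : 0 ≤ n)
    (hnN : n ≤ N) (hε : 0 < ε) (hδ : 0 < δ) (hthresh : V / (δ * ε ^ 2) ≤ N) :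
    n * (1 / V) * (1 - 1 / V) / (ε * N / V) ^ 2 ≤ δ := by
  have hV₀ : 0 < V := by linarith
  have hN₀ : 0 < N := lt_of_lt_of_le (by positivity) hthresh
  have hp₀ : 0 < 1 / V := by positivity
  have hthresh' : V ≤ N * (δ * ε ^ 2) := (div_le_iff₀ (by positivity)).mp hthresh
  have hnum : n * (1 / V) * (1 - 1 / V) ≤ N * (1 / V) := by
    nlinarith [mul_le_mul_of_nonneg_right hnN hp₀.le, mul_nonneg hn₀ hp₀.le]
  calc n * (1 / V) * (1 - 1 / V) / (ε * N / V) ^ 2 ≤ N * (1 / V) / (ε * N / V) ^ 2 := by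
        gcongr
    _ = V / (ε ^ 2 * N) := by field_simp
    _ ≤ δ := by rw [div_le_iff₀ (by positivity)]; linarith

/-- **Sampling accuracy (exact balls-and-bins form).** If `X ∼ Binomial(n, 1/V)` with
`n ≤ N` and `N ≥ V / (δ·ε²)`, then `Pr(|V·X − n| ≥ ε·N) ≤ δ`. -/
theorem binomial_sampling_accuracy {Ω : Type*} [MeasurableSpace Ω] (μ : Measure Ω)
    [IsProbabilityMeasure μ] (V n N : ℕ) (hV : 1 ≤ V) (hnN : n ≤ N) (ε δ : ℝ)
    (hε : ε ∈ Set.Ioo (0 : ℝ) 1) (hδ : δ ∈ Set.Ioo (0 : ℝ) 1)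
    (X : Ω → ℕ) (hX : IsBinomial μ X n (1 / (V : ℝ)))
    (hthresh : (N : ℝ) ≥ (V : ℝ) / (δ * ε ^ 2)) :
    μ {ω | ε * (N : ℝ) ≤ |(V : ℝ) * (X ω : ℝ) - (n : ℝ)|} ≤ ENNReal.ofReal δ := by
  obtain ⟨hε₀, -⟩ := hε
  obtain ⟨hδ₀, -⟩ := hδ
  have hV₁ : (1 : ℝ) ≤ V := by exact_mod_cast hV
  have hV₀ : (0 : ℝ) < V := by linarith
  have hN₀ : (0 : ℝ) < N := lt_of_lt_of_le (by positivity) hthresh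
  have hevent : {ω | ε * (N : ℝ) ≤ |(V : ℝ) * (X ω : ℝ) - (n : ℝ)|}
      = {ω | ε * N / V ≤ |(X ω : ℝ) - n * (1 / V)|} := by
    ext ω
    have : (V : ℝ) * X ω - n = V * ((X ω : ℝ) - n * (1 / V)) := by field_simp
    simp only [Set.mem_ofPred_eq, this, abs_mul, abs_of_pos hV₀, div_le_iff₀' hV₀]
  rw [hevent]
  refine (hX.measure_le_abs_sub_le (by positivity) ((div_le_one hV₀).mpr hV₁)
    (by positivity)).trans (ENNReal.ofReal_le_ofReal ?_)
  exact mul_one_sub_div_sq_le_of_div_le hV₁ (Nat.cast_nonneg n) (by exact_mod_cast hnN) hε₀ hδ₀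
    hthresh
end

section
/- Let V ≥ 1 and n ≤ N be natural numbers with N ≥ 1, and let δ ∈ (0,1). Let X be a binomial random variable with n trials and success probability 1/V, and set ε(N) = √(V/(δ·N)). Then Pr(|V·X − n| ≥ ε(N)·N) ≤ δ. (This is the paper's Corollary on the actual sampling error after N packets: for any stream length N, the achievable sampling error satisfies ε_s(N) = √(Z·V/N) with the rigorous Chebyshev quantile 1/√δ in place of the normal quantile, i.e. ε_s(N) = √(V/(δN)); in particular the error decreases like 1/√N and is below any target ε exactly once N exceeds V/(δ·ε²).) -/
/-! Chebyshev's inequality: `V·X − n = V·(X − n/V)`, and `X` has variance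
`n·p·(1 − p) ≤ N/V` for `p = 1/V`, so deviations `|X − n/V| ≥ ε(N)·N/V` have probability at most
`(N/V) / (ε(N)·N/V)² = δ`. Since `X` is not assumed measurable, Chebyshev is applied to the
binomial pmf (whose variance is the Bernstein polynomial identity) and transferred to `μ` by
subadditivity over the level sets `{X = k}`. -/

open MeasureTheory

def binomialWeight (n : ℕ) (p : ℝ) (k : ℕ) : ℝ :=
  n.choose k * p ^ k * (1 - p) ^ (n - k)

section binomialWeight

variable {n k : ℕ} {p : ℝ}

lemma binomialWeight_nonneg (hp₀ : 0 ≤ p) (hp₁ : p ≤ 1) : 0 ≤ binomialWeight n p k := by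
  have : 0 ≤ 1 - p := sub_nonneg.mpr hp₁
  unfold binomialWeight
  positivity

lemma binomialWeight_eq_zero_of_lt (h : n < k) : binomialWeight n p k = 0 := by
  simp [binomialWeight, Nat.choose_eq_zero_of_lt h]

lemma sum_sq_sub_mul_binomialWeight (n : ℕ) (p : ℝ) :
    ∑ k ∈ Finset.range (n + 1), ((k : ℝ) - n * p) ^ 2 * binomialWeight n p k
      = n * p * (1 - p) := by
  have h := congrArg (Polynomial.eval p) (bernsteinPolynomial.variance ℝ n)
  simp only [Polynomial.eval_finsetSum, Polynomial.eval_mul, Polynomial.eval_pow,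
    Polynomial.eval_sub, Polynomial.eval_X, Polynomial.eval_one,
    Polynomial.eval_natCast, bernsteinPolynomial, nsmul_eq_mul] at h
  rw [← h]
  exact Finset.sum_congr rfl fun k _ => by unfold binomialWeight; ring

end binomialWeight

lemma Finset.sum_filter_le_abs_le_sum_sq_mul_div {ι : Type*} (s : Finset ι) (f w : ι → ℝ)
    (hw : ∀ i ∈ s, 0 ≤ w i) {t : ℝ} (ht : 0 < t) :
    ∑ i ∈ s with t ≤ |f i|, w i ≤ (∑ i ∈ s, f i ^ 2 * w i) / t ^ 2 := by
  rw [le_div_iff₀ (by positivity), Finset.sum_mul]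
  calc ∑ i ∈ s with t ≤ |f i|, w i * t ^ 2
      ≤ ∑ i ∈ s with t ≤ |f i|, f i ^ 2 * w i := by
        refine Finset.sum_le_sum fun i hi => ?_
        obtain ⟨his, hti⟩ := Finset.mem_filter.mp hi
        have : t ^ 2 ≤ f i ^ 2 := by
          simpa only [sq_abs] using pow_le_pow_left₀ ht.le hti 2
        nlinarith [hw i his]
    _ ≤ ∑ i ∈ s, f i ^ 2 * w i :=
        Finset.sum_le_sum_of_subset_of_nonneg (Finset.filter_subset _ _)
          fun i hi _ => mul_nonneg (sq_nonneg _) (hw i hi)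

namespace IsBinomial

variable {Ω : Type*} [MeasurableSpace Ω] {μ : Measure Ω} {X : Ω → ℕ} {n : ℕ} {p : ℝ}

lemma measure_lt_eq_zero (hX : IsBinomial μ X n p) : μ {ω | n < X ω} = 0 := by
  have hsub : {ω | n < X ω} ⊆ ⋃ j : ℕ, {ω | X ω = n + 1 + j} := fun ω hω =>
    Set.mem_iUnion.mpr ⟨X ω - (n + 1), by simp only [Set.mem_ofPred_eq] at hω ⊢; omega⟩
  refine measure_mono_null hsub (measure_iUnion_null fun j => ?_)
  rw [hX, ← binomialWeight, binomialWeight_eq_zero_of_lt (by omega), ENNReal.ofReal_zero]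

lemma measure_le_ofReal_sum (hX : IsBinomial μ X n p) (hp₀ : 0 ≤ p) (hp₁ : p ≤ 1)
    (P : ℕ → Prop) [DecidablePred P] :
    μ {ω | P (X ω)}
      ≤ ENNReal.ofReal (∑ k ∈ Finset.range (n + 1) with P k, binomialWeight n p k) := by
  set s := {k ∈ Finset.range (n + 1) | P k}
  have hsub : {ω | P (X ω)} ⊆ (⋃ k ∈ s, {ω | X ω = k}) ∪ {ω | n < X ω} := by
    intro ω hω
    by_cases hn : n < X ω
    · exact Or.inr hn
    · refine Or.inl (Set.mem_biUnion (x := X ω) ?_ rfl)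
      exact Finset.mem_filter.mpr ⟨Finset.mem_range.mpr (by omega), hω⟩
  calc μ {ω | P (X ω)}
      ≤ μ (⋃ k ∈ s, {ω | X ω = k}) + μ {ω | n < X ω} :=
        (measure_mono hsub).trans (measure_union_le _ _)
    _ ≤ ∑ k ∈ s, μ {ω | X ω = k} := by
        rw [hX.measure_lt_eq_zero, add_zero]
        exact measure_biUnion_finset_le s _
    _ = ENNReal.ofReal (∑ k ∈ s, binomialWeight n p k) := by
        rw [ENNReal.ofReal_sum_of_nonneg fun k _ => binomialWeight_nonneg hp₀ hp₁]
        exact Finset.sum_congr rfl fun k _ => hX k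

lemma measure_le_abs_sub_le_s2 (hX : IsBinomial μ X n p) (hp₀ : 0 ≤ p) (hp₁ : p ≤ 1)
    {t : ℝ} (ht : 0 < t) :
    μ {ω | t ≤ |(X ω : ℝ) - n * p|} ≤ ENNReal.ofReal (n * p * (1 - p) / t ^ 2) := by
  refine (hX.measure_le_ofReal_sum hp₀ hp₁ (fun k => t ≤ |(k : ℝ) - n * p|)).trans ?_
  refine ENNReal.ofReal_le_ofReal ?_
  rw [← sum_sq_sub_mul_binomialWeight]
  exact Finset.sum_filter_le_abs_le_sum_sq_mul_div _ _ _
    (fun _ _ => binomialWeight_nonneg hp₀ hp₁) ht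

end IsBinomial

/-- **Actual sampling error after `N` packets.** If `X ∼ Binomial(n, 1/V)` with `n ≤ N`,
then with `ε(N) = √(V / (δ·N))` we have `Pr(|V·X − n| ≥ ε(N)·N) ≤ δ`. -/
theorem binomial_sampling_error_of_N {Ω : Type*} [MeasurableSpace Ω] (μ : Measure Ω)
    [IsProbabilityMeasure μ] (V n N : ℕ) (hV : 1 ≤ V) (hN : 1 ≤ N) (hnN : n ≤ N) (δ : ℝ)
    (hδ : δ ∈ Set.Ioo (0 : ℝ) 1)
    (X : Ω → ℕ) (hX : IsBinomial μ X n (1 / (V : ℝ))) :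
    μ {ω | Real.sqrt ((V : ℝ) / (δ * (N : ℝ))) * (N : ℝ) ≤ |(V : ℝ) * (X ω : ℝ) - (n : ℝ)|}
      ≤ ENNReal.ofReal δ := by
  obtain ⟨hδ₀, -⟩ := hδ
  have hV₀ : (0 : ℝ) < V := by exact_mod_cast hV
  have hN₀ : (0 : ℝ) < N := by exact_mod_cast hN
  set p : ℝ := 1 / V
  have hp₀ : 0 ≤ p := by positivity
  have hp₁ : p ≤ 1 := div_le_one_of_le₀ (by exact_mod_cast hV) hV₀.le
  have hVp : (V : ℝ) * p = 1 := mul_one_div_cancel hV₀.ne'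
  set t := Real.sqrt ((V : ℝ) / (δ * N)) * N / V
  have ht₀ : 0 < t := by positivity
  have hδt : δ * t ^ 2 = N * p := by
    simp only [t, p, div_pow, mul_pow, Real.sq_sqrt (by positivity : (0 : ℝ) ≤ V / (δ * N))]
    field_simp
  have hset : {ω | Real.sqrt ((V : ℝ) / (δ * N)) * N ≤ |(V : ℝ) * X ω - n|}
      = {ω | t ≤ |(X ω : ℝ) - n * p|} := by
    ext ω
    have : (V : ℝ) * X ω - n = V * ((X ω : ℝ) - n * p) := by
      linear_combination (n : ℝ) * hVp
    rw [Set.mem_ofPred_eq, Set.mem_ofPred_eq, this, abs_mul, abs_of_pos hV₀, div_le_iff₀' hV₀]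
  have hbound : n * p * (1 - p) / t ^ 2 ≤ δ := by
    rw [div_le_iff₀ (by positivity), mul_comm, hδt]
    have : (n : ℝ) ≤ N := by exact_mod_cast hnN
    nlinarith [mul_le_mul_of_nonneg_right this hp₀, mul_nonneg (mul_nonneg n.cast_nonneg hp₀) hp₀]
  rw [hset]
  exact (hX.measure_le_abs_sub_le_s2 hp₀ hp₁ ht₀).trans (ENNReal.ofReal_le_ofReal hbound)
end

section
/- Hierarchical prefixes are modeled as lists over a type α, with fully specified items being lists of fixed length L. Let f : List α → ℕ be a weight function with finite support, let P be a finite set of prefixes, and let q be a prefix such that no p ∈ P is a list-prefix of q (in particular q ∉ P). Then C_{q|P} = f_q − ∑_{h ∈ G(q|P)} f_h. (This is the paper's one-dimensional conditioned-frequency identity, Lemma: C_{q|P} = f_q − ∑_{h ∈ G(q|P)} f_h, which justifies the one-dimensional calcPred computation.) -/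
/-- The set of fully specified items (lists of length `L`) generalized by the prefix `p`. -/
def Hset {α : Type*} (L : ℕ) (p : List α) : Set (List α) :=
  {e | e.length = L ∧ p <+: e}

/-- The set of fully specified items generalized by some prefix in `P`. -/
def HsetP {α : Type*} (L : ℕ) (P : Finset (List α)) : Set (List α) :=
  ⋃ p ∈ P, Hset L p

/-- The frequency of a prefix `p`: the total weight of items it generalizes. -/
noncomputable def freq {α : Type*} (L : ℕ) (f : List α → ℕ) (p : List α) : ℕ :=
  ∑ᶠ e ∈ Hset L p, f e

/-- The conditioned frequency `C_{q|P}`: the total weight of items generalized by `q`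
but by no prefix of `P`. -/
noncomputable def condFreq {α : Type*} (L : ℕ) (f : List α → ℕ) (q : List α)
    (P : Finset (List α)) : ℕ :=
  ∑ᶠ e ∈ Hset L q \ HsetP L P, f e

/-- `G(q|P)`: the prefixes of `P` that are most closely generalized by `q`, i.e. the
`h ∈ P` with `q` a proper prefix of `h` and no `h' ∈ P` strictly between `q` and `h`. -/
noncomputable def Gset {α : Type*} (q : List α) (P : Finset (List α)) : Finset (List α) :=
  @Finset.filter _
    (fun h => (q <+: h ∧ q ≠ h) ∧
      ¬∃ h' ∈ P, (q <+: h' ∧ q ≠ h') ∧ (h' <+: h ∧ h' ≠ h))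
    (Classical.decPred _) P

/-- Two prefixes of the same list are comparable. -/
lemma prefix_total_aux {α : Type*} {a b c : List α} (h1 : a <+: c) (h2 : b <+: c) :
    a <+: b ∨ b <+: a := by
  rcases le_total a.length b.length with h | h
  · left
    have : b.take a.length = a := by
      conv_lhs => rw [List.prefix_iff_eq_take.mp h2]
      rw [List.take_take, min_eq_left h, ← List.prefix_iff_eq_take.mp h1]
    exact this ▸ List.take_prefix _ _
  · right
    have : a.take b.length = b := by
      conv_lhs => rw [List.prefix_iff_eq_take.mp h1]
      rw [List.take_take, min_eq_left h, ← List.prefix_iff_eq_take.mp h2]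
    exact this ▸ List.take_prefix _ _

lemma length_lt_of_proper_prefix {α : Type*} {a b : List α} (h : a <+: b) (hne : a ≠ b) :
    a.length < b.length := by
  rcases lt_or_eq_of_le h.length_le with hlt | heq
  · exact hlt
  · exact absurd (h.eq_of_length heq) hne

/-- **One-dimensional conditioned-frequency identity.** If no prefix of `P` is a
list-prefix of `q`, then `C_{q|P} = f_q − ∑_{h ∈ G(q|P)} f_h`. -/
theorem condFreq_eq_freq_sub_sum_Gset {α : Type*} (L : ℕ) (f : List α → ℕ)
    (hf : (Function.support f).Finite) (P : Finset (List α)) (q : List α)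
    (hq : ∀ p ∈ P, ¬ p <+: q) :
    (condFreq L f q P : ℤ) = (freq L f q : ℤ) - ∑ h ∈ Gset q P, (freq L f h : ℤ) := by
  classical
  set T : Finset (List α) := hf.toFinset with hT
  have key : ∀ s : Set (List α), ∑ᶠ e ∈ s, f e = ∑ e ∈ T, s.indicator f e := by
    intro s
    rw [finsum_mem_def]
    apply finsum_eq_finset_sum_of_support_subset
    intro x hx
    rw [Function.mem_support, Set.indicator_apply_ne_zero] at hx
    simpa [hT] using hx.2
  -- key set-level characterization
  have hchar : ∀ e : List α, (e ∈ Hset L q ∧ e ∈ HsetP L P) ↔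
      ∃ h ∈ Gset q P, e ∈ Hset L h := by
    intro e
    constructor
    · rintro ⟨⟨heL, hqe⟩, heP⟩
      simp only [HsetP, Set.mem_iUnion] at heP
      obtain ⟨p, hpP, hpe⟩ := heP
      set C : Finset (List α) :=
        P.filter (fun h => (q <+: h ∧ q ≠ h) ∧ h <+: e) with hC
      have hqp : q <+: p ∧ q ≠ p := by
        rcases prefix_total_aux hpe.2 hqe with h | h
        · exact absurd h (hq p hpP)
        · exact ⟨h, fun hqp' => hq p hpP (hqp' ▸ List.prefix_refl q)⟩
      have hCne : C.Nonempty := ⟨p, by simp [hC, hpP, hqp.1, hqp.2, hpe.2]⟩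
      obtain ⟨h, hhC, hmin⟩ := C.exists_min_image List.length hCne
      simp only [hC, Finset.mem_filter] at hhC
      obtain ⟨hhP, ⟨hqh, hqneh⟩, hhe⟩ := hhC
      refine ⟨h, ?_, heL, hhe⟩
      simp only [Gset, Finset.mem_filter]
      refine ⟨hhP, ⟨hqh, hqneh⟩, ?_⟩
      rintro ⟨h', hh'P, ⟨hqh', hqneh'⟩, hh'h, hh'ne⟩
      have hh'C : h' ∈ C := by
        simp only [hC, Finset.mem_filter]
        exact ⟨hh'P, ⟨hqh', hqneh'⟩, hh'h.trans hhe⟩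
      have := hmin h' hh'C
      have := length_lt_of_proper_prefix hh'h hh'ne
      omega
    · rintro ⟨h, hhG, heL, hhe⟩
      simp only [Gset, Finset.mem_filter] at hhG
      obtain ⟨hhP, ⟨hqh, _⟩, _⟩ := hhG
      exact ⟨⟨heL, hqh.trans hhe⟩, by
        simp only [HsetP, Set.mem_iUnion]; exact ⟨h, hhP, heL, hhe⟩⟩
  -- at most one h ∈ Gset generalizes a given e
  have huniq : ∀ e : List α, ∀ h₁ ∈ Gset q P, ∀ h₂ ∈ Gset q P,
      e ∈ Hset L h₁ → e ∈ Hset L h₂ → h₁ = h₂ := by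
    intro e h₁ hh₁ h₂ hh₂ he1 he2
    by_contra hne
    simp only [Gset, Finset.mem_filter] at hh₁ hh₂
    obtain ⟨_, he1'⟩ := he1
    obtain ⟨_, he2'⟩ := he2
    rcases prefix_total_aux he1' he2' with hple | hple
    · exact hh₂.2.2 ⟨h₁, hh₁.1, hh₁.2.1, hple, hne⟩
    · exact hh₁.2.2 ⟨h₂, hh₂.1, hh₂.2.1, hple, fun h => hne h.symm⟩
  have hnat : condFreq L f q P + ∑ h ∈ Gset q P, freq L f h = freq L f q := by
    rw [condFreq, freq, key, key]
    have hfreq : ∀ h, freq L f h = ∑ e ∈ T, (Hset L h).indicator f e :=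
      fun h => key (Hset L h)
    simp_rw [hfreq]
    rw [Finset.sum_comm, ← Finset.sum_add_distrib]
    apply Finset.sum_congr rfl
    intro e _
    by_cases heq : e ∈ Hset L q
    · by_cases heP : e ∈ HsetP L P
      · obtain ⟨h₀, hh₀G, hh₀⟩ := (hchar e).mp ⟨heq, heP⟩
        rw [Set.indicator_of_notMem (by simp [Set.mem_diff, heP]),
          Set.indicator_of_mem heq, zero_add]
        rw [Finset.sum_eq_single_of_mem h₀ hh₀G]
        · exact Set.indicator_of_mem hh₀ f
        · intro h hhG hne
          apply Set.indicator_of_notMem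
          intro hh
          exact hne (huniq e h hhG h₀ hh₀G hh hh₀)
      · rw [Set.indicator_of_mem (Set.mem_diff_of_mem heq heP),
          Set.indicator_of_mem heq]
        rw [Finset.sum_eq_zero, add_zero]
        intro h hhG
        apply Set.indicator_of_notMem
        intro hh
        exact heP ((hchar e).mpr ⟨h, hhG, hh⟩).2
    · rw [Set.indicator_of_notMem (fun hh => heq hh.1),
        Set.indicator_of_notMem heq, zero_add]
      apply Finset.sum_eq_zero
      intro h hhG
      apply Set.indicator_of_notMem
      intro hh
      exact heq ((hchar e).mpr ⟨h, hhG, hh⟩).1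
  rw [← hnat]
  push_cast
  ring
end

section
/- Hierarchical prefixes are modeled as lists over a type α, with fully specified items being lists of fixed length L. Let P be a finite set of prefixes and let q be a prefix such that no p ∈ P is a list-prefix of q. Then (i) H_q ∩ H_P = ⋃_{g ∈ G(q|P)} H_g, and (ii) for distinct g, g' ∈ G(q|P), the sets H_g and H_{g'} are disjoint (equivalently, distinct elements of G(q|P) are prefix-incomparable). (This is the structural lemma underlying the paper's one-dimensional conditioned-frequency identity: in one dimension the items of H_q already covered by P are exactly, and disjointly, covered by the most general strict extensions of q in P.) -/
lemma mem_Gset_iff {α : Type*} (q : List α) (P : Finset (List α)) (h : List α) :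
    h ∈ Gset q P ↔ h ∈ P ∧ (q <+: h ∧ q ≠ h) ∧
      ¬∃ h' ∈ P, (q <+: h' ∧ q ≠ h') ∧ (h' <+: h ∧ h' ≠ h) := by
  simp [Gset, Finset.mem_filter, and_assoc]

/-- **Structural lemma for the one-dimensional identity.** If no prefix of `P` is a
list-prefix of `q`, then (i) the items of `H_q` covered by `P` are exactly those covered
by `G(q|P)`, and (ii) distinct members of `G(q|P)` cover disjoint sets of items. -/
theorem Hset_inter_HsetP_eq_biUnion_Gset_and_disjoint {α : Type*} (L : ℕ)
    (P : Finset (List α)) (q : List α) (hq : ∀ p ∈ P, ¬ p <+: q) :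
    (Hset L q ∩ HsetP L P = ⋃ g ∈ Gset q P, Hset L g) ∧
      (∀ g ∈ Gset q P, ∀ g' ∈ Gset q P, g ≠ g' → Disjoint (Hset L g) (Hset L g')) := by
  constructor
  · ext e
    constructor
    · rintro ⟨⟨heL, hqe⟩, he⟩
      classical
      simp only [HsetP, Set.mem_iUnion] at he
      obtain ⟨p, hp, hpL, hpe⟩ := he
      -- p and q are both prefixes of e, hence comparable; ¬ p <+: q forces q strict prefix of p
      have hqp : q <+: p ∧ q ≠ p := by
        rcases List.prefix_or_prefix_of_prefix hpe hqe with h | h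
        · exact absurd h (hq p hp)
        · exact ⟨h, fun heq => hq p hp (heq ▸ List.prefix_refl q)⟩
      -- pick a minimal-length h in P strictly extending q with h <+: e
      set S := P.filter (fun h => (q <+: h ∧ q ≠ h) ∧ h <+: e) with hS
      have hpS : p ∈ S := by
        rw [hS, Finset.mem_filter]; exact ⟨hp, hqp, hpe⟩
      obtain ⟨g, hgS, hgmin⟩ := S.exists_min_image List.length ⟨p, hpS⟩
      rw [hS, Finset.mem_filter] at hgS
      obtain ⟨hgP, hqg, hge⟩ := hgS
      have hgG : g ∈ Gset q P := by
        rw [mem_Gset_iff]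
        refine ⟨hgP, hqg, ?_⟩
        rintro ⟨h', hh'P, hqh', hh'g, hh'ne⟩
        have hh'S : h' ∈ S := by
          rw [hS, Finset.mem_filter]; exact ⟨hh'P, hqh', hh'g.trans hge⟩
        have := hgmin h' hh'S
        have hlt : h'.length < g.length := by
          have hle := hh'g.length_le
          rcases lt_or_eq_of_le hle with h | h
          · exact h
          · exact absurd (hh'g.eq_of_length h) hh'ne
        omega
      exact Set.mem_biUnion hgG ⟨heL, hge⟩
    · intro he
      simp only [Set.mem_iUnion] at he
      obtain ⟨g, hg, heL, hge⟩ := he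
      rw [mem_Gset_iff] at hg
      refine ⟨⟨heL, hg.2.1.1.trans hge⟩, ?_⟩
      simp only [HsetP, Set.mem_iUnion]
      exact ⟨g, hg.1, heL, hge⟩
  · intro g hg g' hg' hne
    rw [Set.disjoint_left]
    rintro e ⟨heL, hge⟩ ⟨_, hg'e⟩
    rw [mem_Gset_iff] at hg hg'
    rcases List.prefix_or_prefix_of_prefix hge hg'e with h | h
    · exact hg'.2.2 ⟨g, hg.1, hg.2.1, h, hne⟩
    · exact hg.2.2 ⟨g', hg'.1, hg'.2.1, h, hne.symm⟩
end

section
/- Two-dimensional prefixes are pairs of lists, with fully specified items being pairs of lists of fixed lengths L₁ and L₂. Let f be a finitely supported ℕ-valued weight function on such pairs, let P be a finite set of prefix pairs, let q be a prefix pair, and let G = G(q|P). Then C_{q|P} ≤ f_q − ∑_{g ∈ G} f_g + ∑_{{g, g'} ⊆ G, g ≠ g'} f_{glb(g, g')}, where the last sum is over unordered pairs of distinct elements of G. (This is the deterministic core of the paper's two-dimensional coverage analysis: the inclusion–exclusion expression computed by the two-dimensional calcPred is a conservative, i.e. never-underestimating, bound on the conditioned frequency C_{q|P}; it follows from the Bonferroni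 inequality |⋃_{g∈G} H_g| ≥ ∑_g |H_g| − ∑_{g≠g'} |H_g ∩ H_{g'}| together with H_g ⊆ H_q ∩ H_P and H_g ∩ H_{g'} = H_{glb(g,g')}.) -/
/-- The set of fully specified items (pairs of lists of lengths `L₁`, `L₂`) generalized
by the two-dimensional prefix pair `p`. -/
def Hset2 {α β : Type*} (L₁ L₂ : ℕ) (p : List α × List β) : Set (List α × List β) :=
  {e | e.1.length = L₁ ∧ e.2.length = L₂ ∧ p.1 <+: e.1 ∧ p.2 <+: e.2}

/-- The set of fully specified items generalized by some prefix pair in `P`. -/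
def Hset2P {α β : Type*} (L₁ L₂ : ℕ) (P : Finset (List α × List β)) :
    Set (List α × List β) :=
  ⋃ p ∈ P, Hset2 L₁ L₂ p

/-- The frequency of a prefix pair `p`: the total weight of items it generalizes. -/
noncomputable def freq2 {α β : Type*} (L₁ L₂ : ℕ) (f : List α × List β → ℕ)
    (p : List α × List β) : ℕ :=
  ∑ᶠ e ∈ Hset2 L₁ L₂ p, f e

/-- The conditioned frequency `C_{q|P}`: the total weight of items generalized by `q`
but by no prefix pair of `P`. -/
noncomputable def condFreq2 {α β : Type*} (L₁ L₂ : ℕ) (f : List α × List β → ℕ)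
    (q : List α × List β) (P : Finset (List α × List β)) : ℕ :=
  ∑ᶠ e ∈ Hset2 L₁ L₂ q \ Hset2P L₁ L₂ P, f e

/-- `p ⪯ p'`: the prefix pair `p` generalizes `p'` coordinatewise. -/
def gen2 {α β : Type*} (p p' : List α × List β) : Prop :=
  p.1 <+: p'.1 ∧ p.2 <+: p'.2

/-- `G(q|P)`: the prefix pairs of `P` most closely generalized by `q`, i.e. the `h ∈ P`
with `q ≺ h` and no `h' ∈ P` with `q ≺ h' ≺ h`. -/
noncomputable def Gset2 {α β : Type*} (q : List α × List β)
    (P : Finset (List α × List β)) : Finset (List α × List β) :=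
  @Finset.filter _
    (fun h => (gen2 q h ∧ q ≠ h) ∧
      ¬∃ h' ∈ P, (gen2 q h' ∧ q ≠ h') ∧ (gen2 h' h ∧ h' ≠ h))
    (Classical.decPred _) P

/-- Two lists are comparable when one is a list-prefix of the other. -/
def Comparable {γ : Type*} (a b : List γ) : Prop := a <+: b ∨ b <+: a

/-- The longer of two lists (used to form the greatest lower bound coordinatewise). -/
def longer {γ : Type*} (a b : List γ) : List γ :=
  if a.length ≤ b.length then b else a

/-- The frequency of the greatest lower bound `glb(h, h')`: when both coordinates are
comparable, `glb(h, h')` is the pair of the longer coordinates; otherwise `glb(h, h')`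
generalizes nothing and has frequency `0`. -/
noncomputable def glbFreq {α β : Type*} (L₁ L₂ : ℕ) (f : List α × List β → ℕ)
    (h h' : List α × List β) : ℕ :=
  @ite _ (Comparable h.1 h'.1 ∧ Comparable h.2 h'.2) (Classical.dec _)
    (freq2 L₁ L₂ f (longer h.1 h'.1, longer h.2 h'.2)) 0

theorem longer_comm {γ : Type*} {a b : List γ} (hab : Comparable a b) :
    longer a b = longer b a := by
  unfold longer
  rcases Nat.lt_trichotomy a.length b.length with hlt | heq | hgt
  · rw [if_pos hlt.le, if_neg (not_le.mpr hlt)]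
  · have hab' : a = b := by
      rcases hab with hp | hp
      · exact hp.eq_of_length heq
      · exact (hp.eq_of_length heq.symm).symm
    subst hab'; rfl
  · rw [if_neg (not_le.mpr hgt), if_pos hgt.le]

theorem glbFreq_comm {α β : Type*} (L₁ L₂ : ℕ) (f : List α × List β → ℕ)
    (h h' : List α × List β) : glbFreq L₁ L₂ f h h' = glbFreq L₁ L₂ f h' h := by
  unfold glbFreq
  by_cases hc : Comparable h.1 h'.1 ∧ Comparable h.2 h'.2
  · have hc' : Comparable h'.1 h.1 ∧ Comparable h'.2 h.2 := ⟨Or.symm hc.1, Or.symm hc.2⟩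
    rw [if_pos hc, if_pos hc', longer_comm hc.1, longer_comm hc.2]
  · have hc' : ¬(Comparable h'.1 h.1 ∧ Comparable h'.2 h.2) := fun hcon =>
      hc ⟨Or.symm hcon.1, Or.symm hcon.2⟩
    rw [if_neg hc, if_neg hc']

/-!
The sets `H_g`, `g ∈ G(q|P)`, lie in `H_q ∩ H_P`, so `C_{q|P} ≤ f(H_q) - f(⋃_g H_g)` and it
suffices to prove the second Bonferroni inequality
`∑_g f(H_g) - ∑_{g ≠ g'} f(H_g ∩ H_g') ≤ f(⋃_g H_g)`. It holds item by item: an item lying in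
`k ≥ 1` of the sets `H_g` is counted `k` times by the first sum and, through the pairs it forms with
one fixed such `g`, at least `k - 1` times by the second. Finally `H_g ∩ H_g' = H_{glb(g,g')}`,
because two prefixes of a common list are comparable.
-/

open Finset Set

theorem Finset.card_le_one_add_card_sym2_not_isDiag {ι : Type*} [DecidableEq ι]
    {T : Finset ι} (hT : T.Nonempty) : #T ≤ 1 + #{s ∈ T.sym2 | ¬ s.IsDiag} := by
  obtain ⟨a, ha⟩ := hT
  have hinj : #(T.erase a) ≤ #{s ∈ T.sym2 | ¬ s.IsDiag} := by
    refine card_le_card_of_injOn (fun b => s(a, b)) (fun b hb => ?_) (fun b _ c _ h => ?_)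
    · obtain ⟨hba, hb⟩ := mem_erase.mp hb
      rw [mem_coe, mem_filter, mk_mem_sym2_iff, Sym2.mk_isDiag_iff]
      exact ⟨⟨ha, hb⟩, Ne.symm hba⟩
    · exact Sym2.congr_right.mp h
  have := card_erase_add_one ha
  omega

theorem finsum_mem_eq_sum_indicator {X M : Type*} [AddCommMonoid M] {f : X → M}
    (hf : (Function.support f).Finite) (A : Set X) :
    ∑ᶠ x ∈ A, f x = ∑ x ∈ hf.toFinset, A.indicator f x := by
  rw [finsum_mem_def]
  refine finsum_eq_sum_of_support_subset _ ?_
  rw [Set.support_indicator, hf.coe_toFinset]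
  exact inter_subset_right

theorem sum_indicator_le_indicator_biUnion_add {X ι : Type*} [DecidableEq ι] (f : X → ℕ)
    (G : Finset ι) (A : ι → Set X) (x : X) :
    ∑ g ∈ G, (A g).indicator f x ≤ (⋃ g ∈ G, A g).indicator f x
      + ∑ s ∈ G.sym2 with ¬ s.IsDiag, (⋂ g ∈ s, A g).indicator f x := by
  classical
  set T := {g ∈ G | x ∈ A g}
  have hsingles : ∑ g ∈ G, (A g).indicator f x = #T * f x := by
    simp [Set.indicator_apply, Finset.sum_ite, T]
  have hpairs : #{s ∈ T.sym2 | ¬ s.IsDiag} * f x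
      ≤ ∑ s ∈ G.sym2 with ¬ s.IsDiag, (⋂ g ∈ s, A g).indicator f x :=
    calc #{s ∈ T.sym2 | ¬ s.IsDiag} * f x
        = ∑ s ∈ T.sym2 with ¬ s.IsDiag, (⋂ g ∈ s, A g).indicator f x := by
          rw [← smul_eq_mul, ← sum_const]
          refine sum_congr rfl fun s hs => (indicator_of_mem ?_ _).symm
          exact mem_iInter₂.mpr fun g hg =>
            (mem_filter.mp (mem_sym2_iff.mp (mem_filter.mp hs).1 g hg)).2
      _ ≤ _ := sum_le_sum_of_subset (filter_subset_filter _ (sym2_mono (filter_subset _ _)))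
  rcases T.eq_empty_or_nonempty with hT | hT
  · simp [hsingles, hT]
  · obtain ⟨g, hg⟩ := hT
    have hx : x ∈ ⋃ g ∈ G, A g := mem_biUnion (mem_filter.mp hg).1 (mem_filter.mp hg).2
    rw [hsingles, Set.indicator_of_mem hx]
    calc #T * f x ≤ (1 + #{s ∈ T.sym2 | ¬ s.IsDiag}) * f x :=
          Nat.mul_le_mul_right _ (card_le_one_add_card_sym2_not_isDiag ⟨g, hg⟩)
      _ = f x + #{s ∈ T.sym2 | ¬ s.IsDiag} * f x := by ring
      _ ≤ _ := Nat.add_le_add_left hpairs _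

theorem finsum_mem_le_finsum_mem_biUnion_add {X ι : Type*} [DecidableEq ι] {f : X → ℕ}
    (hf : (Function.support f).Finite) (G : Finset ι) (A : ι → Set X) :
    ∑ g ∈ G, ∑ᶠ x ∈ A g, f x ≤ ∑ᶠ x ∈ ⋃ g ∈ G, A g, f x
      + ∑ s ∈ G.sym2 with ¬ s.IsDiag, ∑ᶠ x ∈ ⋂ g ∈ s, A g, f x := by
  simp only [finsum_mem_eq_sum_indicator hf]
  rw [sum_comm, sum_comm (s := {s ∈ G.sym2 | ¬ s.IsDiag}), ← sum_add_distrib]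
  exact sum_le_sum fun x _ => sum_indicator_le_indicator_biUnion_add f G A x

theorem finsum_mem_diff_add_finsum_mem_le {X : Type*} {f : X → ℕ}
    (hf : (Function.support f).Finite) {A B C : Set X} (hC : C ⊆ A ∩ B) :
    ∑ᶠ x ∈ A \ B, f x + ∑ᶠ x ∈ C, f x ≤ ∑ᶠ x ∈ A, f x := by
  simp only [finsum_mem_eq_sum_indicator hf]
  rw [← sum_add_distrib]
  refine sum_le_sum fun x _ => ?_
  by_cases hxC : x ∈ C
  · have hxA : x ∈ A := (hC hxC).1
    have hxAB : x ∉ A \ B := fun h => h.2 (hC hxC).2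
    simp [hxC, hxA, hxAB]
  · simp only [indicator_of_notMem hxC, add_zero]
    exact indicator_le_indicator_of_subset sdiff_subset (fun _ => Nat.zero_le _) x

theorem Comparable.prefix_of_length_le {γ : Type*} {a b : List γ} (hab : Comparable a b)
    (hl : a.length ≤ b.length) : a <+: b :=
  hab.elim id fun hba => List.prefix_of_prefix_length_le (List.prefix_refl a) hba hl

theorem comparable_of_prefix_of_prefix {γ : Type*} {a b c : List γ} (ha : a <+: c)
    (hb : b <+: c) : Comparable a b :=
  (le_total a.length b.length).imp (List.prefix_of_prefix_length_le ha hb)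
    (List.prefix_of_prefix_length_le hb ha)

theorem longer_prefix_iff {γ : Type*} {a b x : List γ} (hab : Comparable a b) :
    longer a b <+: x ↔ a <+: x ∧ b <+: x := by
  unfold longer
  split_ifs with hl
  · have hab' := hab.prefix_of_length_le hl
    exact ⟨fun hx => ⟨hab'.trans hx, hx⟩, And.right⟩
  · have hba := Comparable.prefix_of_length_le (Or.symm hab) (le_of_not_ge hl)
    exact ⟨fun hx => ⟨hx, hba.trans hx⟩, And.left⟩

section Hset2

variable {α β : Type*} (L₁ L₂ : ℕ)

theorem Hset2_antitone {p p' : List α × List β} (h : gen2 p p') :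
    Hset2 L₁ L₂ p' ⊆ Hset2 L₁ L₂ p :=
  fun _ ⟨he₁, he₂, hp₁, hp₂⟩ => ⟨he₁, he₂, h.1.trans hp₁, h.2.trans hp₂⟩

theorem Hset2_longer_eq_inter {h h' : List α × List β}
    (hc : Comparable h.1 h'.1 ∧ Comparable h.2 h'.2) :
    Hset2 L₁ L₂ (longer h.1 h'.1, longer h.2 h'.2) = Hset2 L₁ L₂ h ∩ Hset2 L₁ L₂ h' := by
  ext e
  simp only [Hset2, mem_ofPred, mem_inter_iff, longer_prefix_iff hc.1, longer_prefix_iff hc.2]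
  tauto

theorem Hset2_inter_eq_empty {h h' : List α × List β}
    (hc : ¬(Comparable h.1 h'.1 ∧ Comparable h.2 h'.2)) :
    Hset2 L₁ L₂ h ∩ Hset2 L₁ L₂ h' = ∅ :=
  eq_empty_of_forall_notMem fun _ ⟨⟨_, _, h₁, h₂⟩, ⟨_, _, h₁', h₂'⟩⟩ =>
    hc ⟨comparable_of_prefix_of_prefix h₁ h₁', comparable_of_prefix_of_prefix h₂ h₂'⟩

theorem glbFreq_eq_finsum_inter (f : List α × List β → ℕ) (h h' : List α × List β) :
    glbFreq L₁ L₂ f h h' = ∑ᶠ e ∈ Hset2 L₁ L₂ h ∩ Hset2 L₁ L₂ h', f e := by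
  unfold glbFreq
  split_ifs with hc
  · rw [freq2, Hset2_longer_eq_inter L₁ L₂ hc]
  · rw [Hset2_inter_eq_empty L₁ L₂ hc, finsum_mem_empty]

theorem biUnion_Gset2_subset (q : List α × List β) (P : Finset (List α × List β)) :
    ⋃ g ∈ Gset2 q P, Hset2 L₁ L₂ g ⊆ Hset2 L₁ L₂ q ∩ Hset2P L₁ L₂ P := by
  intro e he
  obtain ⟨g, hg, heg⟩ := mem_iUnion₂.mp he
  simp only [Gset2, mem_filter] at hg
  exact ⟨Hset2_antitone L₁ L₂ hg.2.1.1 heg, mem_biUnion hg.1 heg⟩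

end Hset2

/-- **Two-dimensional conservative conditioned-frequency bound.** The inclusion–exclusion
expression of the two-dimensional `calcPred` never underestimates `C_{q|P}`:
`C_{q|P} ≤ f_q − ∑_{g ∈ G} f_g + ∑_{{g,g'} ⊆ G, g ≠ g'} f_{glb(g,g')}`, where the last sum
ranges over unordered pairs of distinct elements of `G = G(q|P)`. -/
theorem condFreq2_le_inclusion_exclusion {α β : Type*} (L₁ L₂ : ℕ)
    (f : List α × List β → ℕ) (hf : (Function.support f).Finite)
    (P : Finset (List α × List β)) (q : List α × List β) :
    (condFreq2 L₁ L₂ f q P : ℤ) ≤ (freq2 L₁ L₂ f q : ℤ)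
      - ∑ g ∈ Gset2 q P, (freq2 L₁ L₂ f g : ℤ)
      + ∑ s ∈ @Finset.filter _ (fun s => ¬ s.IsDiag) (Classical.decPred _)
          (Gset2 q P).sym2,
          Sym2.lift ⟨fun g g' => (glbFreq L₁ L₂ f g g' : ℤ),
            fun g g' => by simp only []; exact_mod_cast glbFreq_comm L₁ L₂ f g g'⟩ s := by
  classical
  have hcover := finsum_mem_diff_add_finsum_mem_le hf (biUnion_Gset2_subset L₁ L₂ q P)
  have hbonferroni := finsum_mem_le_finsum_mem_biUnion_add hf (Gset2 q P) (Hset2 L₁ L₂)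
  calc (condFreq2 L₁ L₂ f q P : ℤ)
      ≤ freq2 L₁ L₂ f q - ((∑ g ∈ Gset2 q P, freq2 L₁ L₂ f g : ℕ) : ℤ)
        + ((∑ s ∈ (Gset2 q P).sym2 with ¬ s.IsDiag, ∑ᶠ e ∈ ⋂ g ∈ s, Hset2 L₁ L₂ g, f e : ℕ)
          : ℤ) := by
        unfold condFreq2 freq2
        omega
    _ = _ := by
        push_cast
        congr 1
        refine sum_congr (by congr!) fun s _ => ?_
        induction s using Sym2.ind with
        | _ g g' =>
          simp only [Sym2.lift_mk, glbFreq_eq_finsum_inter]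
          congr 2
          ext e
          simp [Sym2.mem_iff]
end
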